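/- arXiv:1802.09356 — 5 statements merged into one kernel-verified Lean document; each statement's English description precedes it below -/
import Mathlib

section
/- Consider the discrete-time linear system x[k+1] = A x[k] + B u[k]. Suppose there exists a function V : ℕ → ℝ with V(k) ≥ 0 for all k and V(k+1) ≤ V(k) − x[k]ᵀ Q x[k] − u[k]ᵀ R u[k] for all k, where Q = CᵀC for a real p×n matrix C, R is a symmetric positive definite m×m matrix, and the pair (A, C) is observable in the sense that the linear map x ↦ (Cx, CAx, …, CA^{n−1}x) from ℝⁿ to ℝ^{np} is injective. Then the state sequence converges to zero: x[k] → 0 as k → ∞. -/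
/-!
Summing the decrease condition bounds the series of stage costs by `V 0`, so both
`x[k]ᵀ Q x[k] = ‖C x[k]‖²` and `u[k]ᵀ R u[k]` tend to zero; hence `C x[k] → 0` and, `R` being
positive definite, `u[k] → 0`. Since `C A^(i+1) x[k] = C A^i x[k+1] - C A^i B u[k]`, induction on
`i` gives `C A^i x[k] → 0` for every `i`. Observability says that `x ↦ (C A^i x)_{i<n}` is an
injective linear map on a finite-dimensional space, hence a closed embedding, so `x[k] → 0`.
-/

open Matrix Filter Topology

theorem tendsto_zero_of_le_sub_succ {V c : ℕ → ℝ} (hV : ∀ k, 0 ≤ V k) (hc : ∀ k, 0 ≤ c k)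
    (h : ∀ k, c k ≤ V k - V (k + 1)) : Tendsto c atTop (𝓝 0) := by
  refine (summable_of_sum_range_le hc (c := V 0) fun N => ?_).tendsto_atTop_zero
  calc ∑ i ∈ Finset.range N, c i ≤ ∑ i ∈ Finset.range N, (V i - V (i + 1)) :=
        Finset.sum_le_sum fun i _ => h i
    _ = V 0 - V N := Finset.sum_range_sub' V N
    _ ≤ V 0 := sub_le_self _ (hV N)

theorem LinearMap.tendsto_zero_of_injective {𝕜 E F α : Type*} [NontriviallyNormedField 𝕜]
    [CompleteSpace 𝕜] [NormedAddCommGroup E] [NormedSpace 𝕜 E] [FiniteDimensional 𝕜 E]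
    [NormedAddCommGroup F] [NormedSpace 𝕜 F] {L : E →ₗ[𝕜] F} (hL : Function.Injective L)
    {l : Filter α} {y : α → E} (h : Tendsto (fun a => L (y a)) l (𝓝 0)) :
    Tendsto y l (𝓝 0) := by
  rw [(L.isClosedEmbedding_of_injective (LinearMap.ker_eq_bot.2 hL)).tendsto_nhds_iff, map_zero]
  exact h

section

variable {ι κ α : Type*} [Fintype ι] {l : Filter α}

theorem Filter.Tendsto.const_mulVec {R : Type*} [NonUnitalNonAssocSemiring R]
    [TopologicalSpace R] [ContinuousAdd R] [ContinuousMul R] {v : α → ι → R} {x : ι → R}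
    (h : Tendsto v l (𝓝 x)) (M : Matrix κ ι R) : Tendsto (fun a => M *ᵥ v a) l (𝓝 (M *ᵥ x)) :=
  ((continuous_const.matrix_mulVec continuous_id).tendsto x).comp h

theorem tendsto_zero_of_dotProduct_self {w : α → ι → ℝ}
    (h : Tendsto (fun a => w a ⬝ᵥ w a) l (𝓝 0)) : Tendsto w l (𝓝 0) := by
  refine tendsto_pi_nhds.2 fun j => (tendsto_zero_iff_abs_tendsto_zero _).2 ?_
  have hsqrt : Tendsto (fun a => √(w a ⬝ᵥ w a)) l (𝓝 0) := by simpa using h.sqrt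
  refine squeeze_zero (fun a => abs_nonneg _) (fun a => Real.abs_le_sqrt ?_) hsqrt
  simpa only [dotProduct, sq] using
    Finset.single_le_sum (fun i _ => mul_self_nonneg (w a i)) (Finset.mem_univ j)

theorem dotProduct_transpose_mul_self_mulVec [Fintype κ] (M : Matrix κ ι ℝ) (v : ι → ℝ) :
    v ⬝ᵥ (Mᵀ * M) *ᵥ v = M *ᵥ v ⬝ᵥ M *ᵥ v := by
  rw [← mulVec_mulVec, dotProduct_mulVec, vecMul_transpose]

theorem tendsto_mulVec_of_dotProduct_transpose_mul_self [Fintype κ] {M : Matrix κ ι ℝ}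
    {v : α → ι → ℝ} (h : Tendsto (fun a => v a ⬝ᵥ (Mᵀ * M) *ᵥ v a) l (𝓝 0)) :
    Tendsto (fun a => M *ᵥ v a) l (𝓝 0) :=
  tendsto_zero_of_dotProduct_self <| by simpa only [dotProduct_transpose_mul_self_mulVec] using h

open scoped MatrixOrder in
theorem Matrix.PosDef.tendsto_zero_of_dotProduct_mulVec [DecidableEq ι] {R : Matrix ι ι ℝ}
    (hR : R.PosDef) {v : α → ι → ℝ} (h : Tendsto (fun a => v a ⬝ᵥ R *ᵥ v a) l (𝓝 0)) :
    Tendsto v l (𝓝 0) := by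
  -- `R = Sᵀ S`, so `S v → 0` and `R v = Sᵀ (S v) → 0`; `R` is invertible.
  obtain ⟨S, rfl⟩ := CStarAlgebra.nonneg_iff_eq_star_mul_self.mp hR.posSemidef.nonneg
  rw [star_eq_conjTranspose, conjTranspose_eq_transpose_of_trivial] at hR h
  refine LinearMap.tendsto_zero_of_injective (L := (Sᵀ * S).mulVecLin)
    (mulVec_injective_iff_isUnit.2 hR.isUnit) ?_
  simpa only [mulVecLin_apply, ← mulVec_mulVec, mulVec_zero] using
    (tendsto_mulVec_of_dotProduct_transpose_mul_self h).const_mulVec Sᵀ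

end

section LinearSystem

variable {ι κ σ : Type*} [Fintype κ] [Fintype σ]
  {A : Matrix σ σ ℝ} {B : Matrix σ κ ℝ} {x : ℕ → σ → ℝ} {u : ℕ → κ → ℝ}

theorem tendsto_mul_mulVec_of_dynamics (hdyn : ∀ k, x (k + 1) = A *ᵥ x k + B *ᵥ u k)
    (hu : Tendsto u atTop (𝓝 0)) {M : Matrix ι σ ℝ}
    (hM : Tendsto (fun k => M *ᵥ x k) atTop (𝓝 0)) :
    Tendsto (fun k => (M * A) *ᵥ x k) atTop (𝓝 0) := by
  have hshift : ∀ k, (M * A) *ᵥ x k = M *ᵥ x (k + 1) - (M * B) *ᵥ u k := fun k => by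
    rw [hdyn, mulVec_add, mulVec_mulVec, mulVec_mulVec, add_sub_cancel_right]
  simp_rw [hshift]
  simpa using (hM.comp (tendsto_add_atTop_nat 1)).sub (hu.const_mulVec (M * B))

theorem tendsto_mul_pow_mulVec_of_dynamics [DecidableEq σ]
    (hdyn : ∀ k, x (k + 1) = A *ᵥ x k + B *ᵥ u k)
    (hu : Tendsto u atTop (𝓝 0)) {C : Matrix ι σ ℝ}
    (hC : Tendsto (fun k => C *ᵥ x k) atTop (𝓝 0)) (i : ℕ) :
    Tendsto (fun k => (C * A ^ i) *ᵥ x k) atTop (𝓝 0) := by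
  induction i with
  | zero => simpa using hC
  | succ i ih =>
    simpa only [pow_succ, Matrix.mul_assoc] using tendsto_mul_mulVec_of_dynamics hdyn hu ih

end LinearSystem

def observabilityMap {R ι σ : Type*} [CommRing R] [Fintype σ] [DecidableEq σ]
    (C : Matrix ι σ R) (A : Matrix σ σ R) (N : ℕ) :
    (σ → R) →ₗ[R] (Fin N × ι → R) :=
  LinearMap.pi fun ij => (LinearMap.proj ij.2).comp (C * A ^ (ij.1 : ℕ)).mulVecLin

theorem tendsto_zero_of_observabilityMap {R ι σ α : Type*} [CommRing R] [TopologicalSpace R]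
    [Fintype σ] [DecidableEq σ] {C : Matrix ι σ R} {A : Matrix σ σ R} {N : ℕ} {l : Filter α}
    {x : α → σ → R} (h : ∀ i : ℕ, Tendsto (fun a => (C * A ^ i) *ᵥ x a) l (𝓝 0)) :
    Tendsto (fun a => observabilityMap C A N (x a)) l (𝓝 0) :=
  tendsto_pi_nhds.2 fun ij => tendsto_pi_nhds.1 (h ij.1) ij.2

/-- **Theorem 1 (Stability).**
For the discrete-time linear system `x[k+1] = A x[k] + B u[k]`, if there is a
nonnegative (Lyapunov) function `V` decreasing at each step by at least the
stage cost `x[k]ᵀ Q x[k] + u[k]ᵀ R u[k]`, where `Q = CᵀC`, `R` is symmetric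
positive definite, and the pair `(A, C)` is observable (the map
`x ↦ (Cx, CAx, …, CA^{n−1}x)` is injective), then `x[k] → 0`. -/
theorem mpc_stability
    {n m p : ℕ}
    (A : Matrix (Fin n) (Fin n) ℝ) (B : Matrix (Fin n) (Fin m) ℝ)
    (C : Matrix (Fin p) (Fin n) ℝ) (Q : Matrix (Fin n) (Fin n) ℝ)
    (R : Matrix (Fin m) (Fin m) ℝ)
    (hQ : Q = Cᵀ * C)
    (hR : R.PosDef)
    (hobs : Function.Injective
      (fun v : Fin n → ℝ => fun ij : Fin n × Fin p =>
        (C * A ^ (ij.1 : ℕ)).mulVec v ij.2))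
    (x : ℕ → Fin n → ℝ) (u : ℕ → Fin m → ℝ)
    (hdyn : ∀ k, x (k + 1) = A.mulVec (x k) + B.mulVec (u k))
    (V : ℕ → ℝ)
    (hV_nonneg : ∀ k, 0 ≤ V k)
    (hV_dec : ∀ k, V (k + 1) ≤ V k - x k ⬝ᵥ Q.mulVec (x k) - u k ⬝ᵥ R.mulVec (u k)) :
    Tendsto x atTop (nhds 0) := by
  subst hQ
  have hx_cost : ∀ k, 0 ≤ x k ⬝ᵥ (Cᵀ * C) *ᵥ x k := fun k => by
    rw [dotProduct_transpose_mul_self_mulVec]; exact dotProduct_self_star_nonneg _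
  have hu_cost : ∀ k, 0 ≤ u k ⬝ᵥ R *ᵥ u k := fun k => by
    simpa using hR.posSemidef.dotProduct_mulVec_nonneg (u k)
  have hCx : Tendsto (fun k => C *ᵥ x k) atTop (𝓝 0) :=
    tendsto_mulVec_of_dotProduct_transpose_mul_self <| tendsto_zero_of_le_sub_succ hV_nonneg
      hx_cost fun k => by linarith [hV_dec k, hu_cost k]
  have hu : Tendsto u atTop (𝓝 0) :=
    hR.tendsto_zero_of_dotProduct_mulVec <| tendsto_zero_of_le_sub_succ hV_nonneg
      hu_cost fun k => by linarith [hV_dec k, hx_cost k]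
  exact LinearMap.tendsto_zero_of_injective (L := observabilityMap C A n) hobs <|
    tendsto_zero_of_observabilityMap (tendsto_mul_pow_mulVec_of_dynamics hdyn hu hCx)
end

section
/- Consider the discrete-time linear system x[k+1] = A x[k] + B u[k] with componentwise box constraints u_min ≤ u ≤ u_max and x_min ≤ x ≤ x_max, a feedback gain K, and a terminal set Ω ⊆ ℝⁿ satisfying: (i) for every x ∈ Ω, u_min ≤ Kx ≤ u_max and x_min ≤ x ≤ x_max; (ii) for every x ∈ Ω, (A+BK)x ∈ Ω. Suppose from initial state x₀ there is an input sequence u[0], …, u[N−1] whose resulting states x[0] = x₀, x[i+1] = A x[i] + B u[i] satisfy u_min ≤ u[i] ≤ u_max for 0 ≤ i ≤ N−1, x_min ≤ x[i] ≤ x_max for 1 ≤ i ≤ N−1, and x[N] ∈ Ω. Then the shifted tail sequence ũ[i] := u[i+1] for 0 ≤ i ≤ N−2 and ũ[N−1] := K x[N] is feasible from the successor state x₁ = A x₀ + B u[0]: the resulting states x̃[0] = x₁, x̃[i+1] = A x̃[i] + B ũ[i] satisfy u_min ≤ ũ[i] ≤ u_max for 0 ≤ i ≤ N−1, x_min ≤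 x̃[i] ≤ x_max for 1 ≤ i ≤ N−1, and x̃[N] ∈ Ω. -/
open Matrix

/-- **Theorem 2 (Recursive feasibility).**
For the system `x[k+1] = A x[k] + B u[k]` with componentwise box constraints,
feedback gain `K`, and a terminal set `Ω` that is constraint-admissible and
invariant under `A + BK`: if `u[0], …, u[N−1]` is feasible from `x₀` (inputs
within bounds, intermediate states within bounds, terminal state in `Ω`), then
the shifted tail sequence `utail[i] = u[i+1]` (for `i ≤ N−2`), `utail[N−1] = K x[N]`
is feasible from the successor state `x₁ = A x₀ + B u[0]`. -/
theorem mpc_recursive_feasibility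
    {n m : ℕ} (A : Matrix (Fin n) (Fin n) ℝ) (B : Matrix (Fin n) (Fin m) ℝ)
    (K : Matrix (Fin m) (Fin n) ℝ)
    (uMin uMax : Fin m → ℝ) (xMin xMax : Fin n → ℝ)
    (Ω : Set (Fin n → ℝ))
    (hΩ_adm : ∀ x ∈ Ω, (uMin ≤ K.mulVec x ∧ K.mulVec x ≤ uMax) ∧
      (xMin ≤ x ∧ x ≤ xMax))
    (hΩ_inv : ∀ x ∈ Ω, (A + B * K).mulVec x ∈ Ω)
    (N : ℕ) (hN : 0 < N)
    (x₀ : Fin n → ℝ) (u : ℕ → Fin m → ℝ) (x : ℕ → Fin n → ℝ)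
    (hx0 : x 0 = x₀)
    (hdyn : ∀ i, x (i + 1) = A.mulVec (x i) + B.mulVec (u i))
    (hu_feas : ∀ i < N, uMin ≤ u i ∧ u i ≤ uMax)
    (hx_feas : ∀ i, 0 < i → i < N → xMin ≤ x i ∧ x i ≤ xMax)
    (hterm : x N ∈ Ω) :
    ∃ (utail : ℕ → Fin m → ℝ) (xtail : ℕ → Fin n → ℝ),
      (∀ i, i < N - 1 → utail i = u (i + 1)) ∧
      utail (N - 1) = K.mulVec (x N) ∧
      xtail 0 = A.mulVec x₀ + B.mulVec (u 0) ∧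
      (∀ i, xtail (i + 1) = A.mulVec (xtail i) + B.mulVec (utail i)) ∧
      (∀ i < N, uMin ≤ utail i ∧ utail i ≤ uMax) ∧
      (∀ i, 0 < i → i < N → xMin ≤ xtail i ∧ xtail i ≤ xMax) ∧
      xtail N ∈ Ω := by
  set utail : ℕ → Fin m → ℝ := fun i => if i < N - 1 then u (i + 1) else K.mulVec (x N)
    with hutail
  set xtail : ℕ → Fin n → ℝ := fun i => Nat.rec (A.mulVec x₀ + B.mulVec (u 0))
    (fun j xj => A.mulVec xj + B.mulVec (utail j)) i with hxtail
  have hx1 : xtail 0 = A.mulVec x₀ + B.mulVec (u 0) := rfl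
  have hrec : ∀ i, xtail (i + 1) = A.mulVec (xtail i) + B.mulVec (utail i) := fun i => rfl
  -- xtail i = x (i+1) for i ≤ N-1
  have hshift : ∀ i, i ≤ N - 1 → xtail i = x (i + 1) := by
    intro i hi
    induction i with
    | zero => rw [hx1, hdyn 0, hx0]
    | succ j ih =>
      have hj : j ≤ N - 1 := Nat.le_of_succ_le hi
      have hjlt : j < N - 1 := hi
      rw [hrec, ih hj, hdyn (j + 1)]
      have : utail j = u (j + 1) := by simp [hutail, hjlt]
      rw [this]
  have hlast : xtail (N - 1) = x N := by
    have := hshift (N - 1) le_rfl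
    rwa [Nat.sub_add_cancel hN] at this
  have huN : utail (N - 1) = K.mulVec (x N) := by simp [hutail]
  refine ⟨utail, xtail, ?_, huN, hx1, hrec, ?_, ?_, ?_⟩
  · intro i hi; simp [hutail, hi]
  · intro i hi
    by_cases h : i < N - 1
    · have : utail i = u (i + 1) := by simp [hutail, h]
      rw [this]
      exact hu_feas (i + 1) (by omega)
    · have hieq : i = N - 1 := by omega
      rw [hieq, huN]
      exact (hΩ_adm _ hterm).1
  · intro i hi0 hiN
    rw [hshift i (by omega)]
    by_cases h : i + 1 < N
    · exact hx_feas (i + 1) (by omega) h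
    · have : i + 1 = N := by omega
      rw [this]
      exact (hΩ_adm _ hterm).2
  · have : xtail N = A.mulVec (x N) + B.mulVec (K.mulVec (x N)) := by
      have hN1 : N = (N - 1) + 1 := (Nat.sub_add_cancel hN).symm
      conv_lhs => rw [hN1]
      rw [hrec, hlast, huN]
    rw [this]
    have := hΩ_inv (x N) hterm
    rwa [Matrix.add_mulVec, ← Matrix.mulVec_mulVec] at this
end

section
/- Let Φ = A + BK for real matrices A (n×n), B (n×m), K (m×n), and for each N ∈ ℕ define Ω_N := {x ∈ ℝⁿ : for all 0 ≤ i ≤ N, u_min ≤ K Φ^i x ≤ u_max, componentwise}. Suppose N_c ∈ ℕ is such that every x ∈ Ω_{N_c} also satisfies u_min ≤ K Φ^{N_c+1} x ≤ u_max. Then Ω_{N_c} = {x ∈ ℝⁿ : for all i ≥ 0, u_min ≤ K Φ^i x ≤ u_max}; that is, constraint satisfaction over the finite horizon N_c implies constraint satisfaction over the infinite horizon. -/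
open Matrix

/-- **Finite-horizon determination of the terminal set.**
Let `Φ = A + BK` and `Ω_N = {x : ∀ 0 ≤ i ≤ N, u_min ≤ KΦⁱx ≤ u_max}`.
If every `x ∈ Ω_{N_c}` also satisfies `u_min ≤ KΦ^{N_c+1}x ≤ u_max`, then
`Ω_{N_c}` coincides with the infinite-horizon set
`{x : ∀ i ≥ 0, u_min ≤ KΦⁱx ≤ u_max}`. -/
theorem finite_horizon_constraint_check
    {n m : ℕ} (A : Matrix (Fin n) (Fin n) ℝ) (B : Matrix (Fin n) (Fin m) ℝ)
    (K : Matrix (Fin m) (Fin n) ℝ)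
    (uMin uMax : Fin m → ℝ)
    (Φ : Matrix (Fin n) (Fin n) ℝ) (hΦ : Φ = A + B * K)
    (Ω : ℕ → Set (Fin n → ℝ))
    (hΩ : ∀ N : ℕ, Ω N = {x : Fin n → ℝ | ∀ i ≤ N,
      uMin ≤ (K * Φ ^ i).mulVec x ∧ (K * Φ ^ i).mulVec x ≤ uMax})
    (Nc : ℕ)
    (hNc : ∀ x ∈ Ω Nc,
      uMin ≤ (K * Φ ^ (Nc + 1)).mulVec x ∧ (K * Φ ^ (Nc + 1)).mulVec x ≤ uMax) :
    Ω Nc = {x : Fin n → ℝ | ∀ i : ℕ,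
      uMin ≤ (K * Φ ^ i).mulVec x ∧ (K * Φ ^ i).mulVec x ≤ uMax} := by
  -- Invariance: if x ∈ Ω Nc then Φ x ∈ Ω Nc.
  have key : ∀ x ∈ Ω Nc, Φ.mulVec x ∈ Ω Nc := by
    intro x hx
    rw [hΩ] at hx ⊢
    intro i hi
    have : (K * Φ ^ i).mulVec (Φ.mulVec x) = (K * Φ ^ (i + 1)).mulVec x := by
      rw [mulVec_mulVec, Matrix.mul_assoc, ← pow_succ]
    rw [this]
    rcases Nat.lt_or_ge i Nc with h | h
    · exact hx (i + 1) (by omega)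
    · have : i = Nc := le_antisymm hi h
      subst this
      exact hNc x (by rw [hΩ]; exact hx)
  -- Iterated invariance.
  have iter : ∀ x ∈ Ω Nc, ∀ j : ℕ, (Φ ^ j).mulVec x ∈ Ω Nc := by
    intro x hx j
    induction j with
    | zero => simpa using hx
    | succ j ih =>
        have : (Φ ^ (j + 1)).mulVec x = Φ.mulVec ((Φ ^ j).mulVec x) := by
          rw [mulVec_mulVec, ← pow_succ']
        rw [this]; exact key _ ih
  ext x
  simp only [Set.mem_setOf_eq]
  constructor
  · intro hx i
    have h0 := iter x hx i
    rw [hΩ] at h0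
    have := h0 0 (Nat.zero_le _)
    simpa [mulVec_mulVec] using this
  · intro hx
    rw [hΩ]
    intro i _
    exact hx i
end

section
/- Consider the discrete-time linear system x[i+1] = A x[i] + B u[i] with dual-mode input u[i] arbitrary for 0 ≤ i ≤ N−1 and u[i] = K x[i] for i ≥ N. Let Q̄ be a real n×n matrix satisfying Q̄ = (A+BK)ᵀ Q̄ (A+BK) + Q + Kᵀ R K, and suppose x[i]ᵀ Q̄ x[i] → 0 as i → ∞. Then the infinite-horizon cost ∑_{i=0}^{∞} (x[i]ᵀ Q x[i] + u[i]ᵀ R u[i]) converges and equals the finite-horizon cost ∑_{i=0}^{N−1} (x[i]ᵀ Q x[i] + u[i]ᵀ R u[i]) + x[N]ᵀ Q̄ x[N]. -/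
open Matrix Filter

/-- **Infinite-horizon cost as finite-horizon cost with terminal weighting.**
For the dual-mode system `x[i+1] = A x[i] + B u[i]` with `u[i] = K x[i]` for
`i ≥ N`, if `Q̄ = (A+BK)ᵀQ̄(A+BK) + Q + KᵀRK` and `x[i]ᵀ Q̄ x[i] → 0`, then
`∑_{i=0}^{∞} (x[i]ᵀQx[i] + u[i]ᵀRu[i])` converges and equals
`∑_{i=0}^{N−1} (x[i]ᵀQx[i] + u[i]ᵀRu[i]) + x[N]ᵀ Q̄ x[N]`. -/
theorem infinite_horizon_cost_eq_finite_horizon_cost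
    {n m : ℕ}
    (A Q Qbar : Matrix (Fin n) (Fin n) ℝ)
    (B : Matrix (Fin n) (Fin m) ℝ)
    (R : Matrix (Fin m) (Fin m) ℝ) (K : Matrix (Fin m) (Fin n) ℝ)
    (N : ℕ) (x : ℕ → Fin n → ℝ) (u : ℕ → Fin m → ℝ)
    (hdyn : ∀ i, x (i + 1) = A.mulVec (x i) + B.mulVec (u i))
    (hu : ∀ i, N ≤ i → u i = K.mulVec (x i))
    (hLyap : Qbar = (A + B * K)ᵀ * Qbar * (A + B * K) + Q + Kᵀ * R * K)
    (hconv : Tendsto (fun i => x i ⬝ᵥ Qbar.mulVec (x i)) atTop (nhds 0)) :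
    Tendsto
      (fun M => ∑ i ∈ Finset.range M,
        (x i ⬝ᵥ Q.mulVec (x i) + u i ⬝ᵥ R.mulVec (u i)))
      atTop
      (nhds ((∑ i ∈ Finset.range N,
        (x i ⬝ᵥ Q.mulVec (x i) + u i ⬝ᵥ R.mulVec (u i)))
        + x N ⬝ᵥ Qbar.mulVec (x N))) := by
  set f : ℕ → ℝ := fun i => x i ⬝ᵥ Qbar.mulVec (x i) with hf
  set c : ℕ → ℝ := fun i => x i ⬝ᵥ Q.mulVec (x i) + u i ⬝ᵥ R.mulVec (u i)
    with hc
  set T : ℝ := (∑ i ∈ Finset.range N, c i) + f N with hT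
  -- step lemma
  have hstep : ∀ i, N ≤ i → c i = f i - f (i + 1) := by
    intro i hi
    have hx : x (i + 1) = (A + B * K).mulVec (x i) := by
      rw [hdyn i, hu i hi, add_mulVec, mulVec_mulVec]
    have key : f i = f (i + 1) + c i := by
      simp only [hf, hx]
      conv_lhs => rw [hLyap]
      have h1 : ∀ (M : Matrix (Fin n) (Fin n) ℝ) (v w : Fin n → ℝ),
          v ⬝ᵥ (Mᵀ * Qbar * M).mulVec w
            = M.mulVec v ⬝ᵥ Qbar.mulVec (M.mulVec w) := by
        intro M v w
        rw [← mulVec_mulVec, ← mulVec_mulVec, dotProduct_mulVec,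
          vecMul_transpose]
      have h2 : x i ⬝ᵥ (Kᵀ * R * K).mulVec (x i)
          = K.mulVec (x i) ⬝ᵥ R.mulVec (K.mulVec (x i)) := by
        rw [← mulVec_mulVec, ← mulVec_mulVec, dotProduct_mulVec,
          vecMul_transpose]
      rw [add_mulVec, add_mulVec, dotProduct_add, dotProduct_add, h1, h2]
      simp only [hc, hu i hi]
      ring
    rw [key]; ring
  -- partial sums for M ≥ N
  have hpartial : ∀ M, N ≤ M → ∑ i ∈ Finset.range M, c i = T - f M := by
    intro M hM
    induction M with
    | zero =>
      obtain rfl : N = 0 := Nat.le_zero.mp hM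
      simp [hT]
    | succ M ih =>
      rcases Nat.lt_or_ge N (M + 1) with h | h
      · have hM' : N ≤ M := Nat.lt_succ_iff.mp h
        rw [Finset.sum_range_succ, ih hM', hstep M hM']
        ring
      · obtain rfl : N = M + 1 := le_antisymm hM h
        simp [hT]
  have : Tendsto (fun M => T - f M) atTop (nhds (T - 0)) :=
    tendsto_const_nhds.sub hconv
  rw [sub_zero] at this
  refine this.congr' ?_
  filter_upwards [eventually_ge_atTop N] with M hM
  exact (hpartial M hM).symm
end

section
/- Let α ≥ 0, h, v, L, d₀ be real numbers with h v + L + d₀ ≥ 0, and let D be a real number with 0 ≤ D ≤ 2(h v + L + d₀). For p ∈ [0,1] define δ(p) := D/(2 − e^{−α p}) − h v − L − d₀. Then for all p, p' ∈ [0,1], |δ(p') − δ(p)| ≤ D/2 ≤ h v + L + d₀; that is, after each discrete transition changing the cut-in probability, the spacing error can only jump by a value between −(h v + L + d₀) and h v + L + d₀. -/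
/-- **Bounded jumps of the stochastic spacing error.**
If `hv + L + d₀ ≥ 0` and `0 ≤ D ≤ 2(hv + L + d₀)`, then for
`δ(p) = D/(2 − e^{−αp}) − hv − L − d₀` and any `p, p' ∈ [0,1]`,
`|δ(p') − δ(p)| ≤ D/2 ≤ hv + L + d₀`: the spacing error can only jump by a
value between `−(hv + L + d₀)` and `hv + L + d₀`. -/
theorem stochastic_spacing_error_jump_bound
    (α h v L d₀ D : ℝ) (hα : 0 ≤ α)
    (hsafe : 0 ≤ h * v + L + d₀)
    (hD₀ : 0 ≤ D) (hD₁ : D ≤ 2 * (h * v + L + d₀))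
    (δ : ℝ → ℝ)
    (hδ : ∀ p, δ p = D / (2 - Real.exp (-α * p)) - h * v - L - d₀) :
    ∀ p ∈ Set.Icc (0 : ℝ) 1, ∀ p' ∈ Set.Icc (0 : ℝ) 1,
      |δ p' - δ p| ≤ D / 2 ∧ D / 2 ≤ h * v + L + d₀ := by
  have key : ∀ p ∈ Set.Icc (0 : ℝ) 1,
      D / 2 ≤ D / (2 - Real.exp (-α * p)) ∧
      D / (2 - Real.exp (-α * p)) ≤ D := by
    intro p hp
    have hexp_pos : 0 < Real.exp (-α * p) := Real.exp_pos _
    have hexp_le : Real.exp (-α * p) ≤ 1 := by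
      apply Real.exp_le_one_iff.mpr
      nlinarith [hp.1]
    have hden1 : (1 : ℝ) ≤ 2 - Real.exp (-α * p) := by linarith
    have hden2 : 2 - Real.exp (-α * p) ≤ 2 := by linarith
    have hdenpos : (0 : ℝ) < 2 - Real.exp (-α * p) := by linarith
    constructor
    · exact div_le_div_of_nonneg_left hD₀ hdenpos hden2
    · calc D / (2 - Real.exp (-α * p)) ≤ D / 1 :=
            div_le_div_of_nonneg_left hD₀ one_pos hden1
        _ = D := div_one D
  intro p hp p' hp'
  obtain ⟨h1, h2⟩ := key p hp
  obtain ⟨h1', h2'⟩ := key p' hp'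
  constructor
  · rw [hδ, hδ, abs_sub_le_iff]
    constructor <;> linarith
  · linarith
end
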